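/- arXiv:1507.08306 — 2 statements merged into one kernel-verified Lean document; each statement's English description precedes it below -/
import Mathlib

section
/- Canonical extension preserves the characteristic map property: if λ = (a₁ … aₘ) is a Z-characteristic map over K, then the (n+1)×(m+1) matrix Λ with columns (a_i, 0)ᵀ for i ≠ v, (a_v, −1)ᵀ for v₁, and (0,…,0,1)ᵀ for v₂ is a Z-characteristic map over wed_v(K). -/
def IsComplex {V : Type*} (K : Set (Finset V)) : Prop :=
  ∀ s ∈ K, ∀ t, t ⊆ s → t ∈ K

def IsFacet {V : Type*} (K : Set (Finset V)) (s : Finset V) : Prop :=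
  s ∈ K ∧ ∀ t ∈ K, s ⊆ t → t = s

/-- The simplicial wedge `wed_v K = (I ⋆ link_K {v}) ∪ (∂I ⋆ (K ∖ {v}))` on the vertex set
`V ⊕ Unit`, the two new vertices being `v₁ = Sum.inl v` and `v₂ = Sum.inr ()`. -/
def wed {V : Type*} [DecidableEq V] (K : Set (Finset V)) (v : V) :
    Set (Finset (V ⊕ Unit)) :=
  {s | ∃ a : Finset (V ⊕ Unit), a ⊆ ({Sum.inl v, Sum.inr ()} : Finset (V ⊕ Unit)) ∧
    ∃ τ : Finset V, v ∉ τ ∧ τ ∈ K ∧ s = a ∪ τ.image Sum.inl ∧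
      (insert v τ ∈ K ∨ a.card ≤ 1)}

/-- A `ℤ`-characteristic map over `K` with values in the `ℤ`-module `M`: the vectors of every
facet form a `ℤ`-basis of `M`. -/
def IsZCharMap {V : Type*} (K : Set (Finset V)) {M : Type*} [AddCommGroup M] [Module ℤ M]
    (lam : V → M) : Prop :=
  ∀ s, IsFacet K s → ∃ b : Module.Basis {x : V // x ∈ s} ℤ M, ∀ i : {x : V // x ∈ s}, b i = lam i.val


private def snocLE (n : ℕ) : ((Fin n → ℤ) × ℤ) ≃ₗ[ℤ] (Fin (n + 1) → ℤ) where
  toFun p := Fin.snoc p.1 p.2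
  map_add' p q := by
    funext i
    refine Fin.lastCases ?_ (fun j => ?_) i <;> simp
  map_smul' c p := by
    funext i
    refine Fin.lastCases ?_ (fun j => ?_) i <;> simp
  invFun f := (Fin.init f, f (Fin.last n))
  left_inv p := by simp
  right_inv f := by simp [Fin.snoc_init_self]

private def shear1 {n : ℕ} (h : (Fin n → ℤ) →ₗ[ℤ] ℤ) :
    ((Fin n → ℤ) × ℤ) ≃ₗ[ℤ] ((Fin n → ℤ) × ℤ) where
  toFun p := (p.1, p.2 + h p.1)
  map_add' p q := by simp [Prod.ext_iff]; ring
  map_smul' c p := by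
    refine Prod.ext rfl ?_
    simp only [Prod.smul_fst, Prod.smul_snd, map_smul, smul_eq_mul, RingHom.id_apply]
    ring
  invFun p := (p.1, p.2 - h p.1)
  left_inv p := by simp
  right_inv p := by simp

private def shear2 {n : ℕ} (u : Fin n → ℤ) :
    ((Fin n → ℤ) × ℤ) ≃ₗ[ℤ] ((Fin n → ℤ) × ℤ) where
  toFun p := (p.1 + p.2 • u, -p.2)
  map_add' p q := by
    refine Prod.ext ?_ ?_
    · simp only [Prod.fst_add, Prod.snd_add, add_smul]
      abel
    · simp only [Prod.snd_add, neg_add]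
  map_smul' c p := by
    refine Prod.ext ?_ ?_
    · simp only [Prod.smul_fst, Prod.smul_snd, smul_smul, smul_add, RingHom.id_apply, smul_eq_mul]
    · simp
  invFun p := (p.1 + p.2 • u, -p.2)
  left_inv p := by
    refine Prod.ext ?_ ?_ <;> simp
  right_inv p := by
    refine Prod.ext ?_ ?_ <;> simp

private lemma build_basis {V : Type*} [DecidableEq V] {n : ℕ}
    (s : Finset (V ⊕ Unit))
    {ι : Type*} (c : Module.Basis ι ℤ (Fin (n + 1) → ℤ))
    (Λ : V ⊕ Unit → Fin (n + 1) → ℤ)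
    (f : ι → {y : V ⊕ Unit // y ∈ s}) (hf : Function.Bijective f)
    (hc : ∀ i, c i = Λ (f i).val) :
    ∃ b : Module.Basis {y : V ⊕ Unit // y ∈ s} ℤ (Fin (n + 1) → ℤ), ∀ i, b i = Λ i.val := by
  refine ⟨c.reindex (Equiv.ofBijective f hf), ?_⟩
  rintro ⟨y, hy⟩
  obtain ⟨j, hj⟩ := hf.2 ⟨y, hy⟩
  rw [← hj, Module.Basis.reindex_apply]
  rw [show (Equiv.ofBijective f hf).symm (f j) = j from (Equiv.ofBijective f hf).symm_apply_apply j]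
  exact hc j

private lemma snocLE_apply {n : ℕ} (p : Fin n → ℤ) (z : ℤ) :
    snocLE n (p, z) = (Fin.snoc p z : Fin (n + 1) → ℤ) := rfl

private lemma shear1_apply {n : ℕ} (h : (Fin n → ℤ) →ₗ[ℤ] ℤ) (p : Fin n → ℤ) (z : ℤ) :
    shear1 h (p, z) = (p, z + h p) := rfl

private lemma shear2_apply {n : ℕ} (u : Fin n → ℤ) (p : Fin n → ℤ) (z : ℤ) :
    shear2 u (p, z) = (p + z • u, -z) := rfl

/-- Canonical extension preserves the characteristic map property: if `λ = (a₁ … a_m)` is a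
`ℤ`-characteristic map over `K`, then the `(n+1) × (m+1)` matrix with columns `(a_w, 0)ᵀ`
for `w ≠ v`, `(a_v, -1)ᵀ` for `v₁`, and `(0, 1)ᵀ` for `v₂` is a `ℤ`-characteristic map over
`wed_v K`. -/
theorem stmt_15 {V : Type*} [Fintype V] [DecidableEq V] (n : ℕ) (K : Set (Finset V))
    (hK : IsComplex K) (v : V) (lam : V → Fin n → ℤ)
    (hlam : IsZCharMap K lam) :
    IsZCharMap (wed K v)
      (Sum.elim
        (fun w : V =>
          if w = v then (Fin.snoc (lam v) (-1 : ℤ) : Fin (n + 1) → ℤ)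
          else (Fin.snoc (lam w) (0 : ℤ) : Fin (n + 1) → ℤ))
        (fun _ : Unit => (Fin.snoc (0 : Fin n → ℤ) (1 : ℤ) : Fin (n + 1) → ℤ))) := by
  intro s hs
  obtain ⟨hsmem, hsmax⟩ := hs
  obtain ⟨a, ha, τ, hvτ, hτK, hseq, hcond⟩ := hsmem
  by_cases hvK : insert v τ ∈ K
  · -- Case A : s = {inl v, inr ()} ∪ τ.image inl, and insert v τ is a facet of K
    have hpair_mem : ({Sum.inl v, Sum.inr ()} : Finset (V ⊕ Unit)) ∪ τ.image Sum.inl ∈ wed K v :=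
      ⟨_, Finset.Subset.refl _, τ, hvτ, hτK, rfl, Or.inl hvK⟩
    have hs_eq : ({Sum.inl v, Sum.inr ()} : Finset (V ⊕ Unit)) ∪ τ.image Sum.inl = s :=
      hsmax _ hpair_mem
        (by rw [hseq]; exact Finset.union_subset_union ha (Finset.Subset.refl _))
    have hfacet : IsFacet K (insert v τ) := by
      refine ⟨hvK, fun σ hσ hsub' => ?_⟩
      have hvσ : v ∈ σ := hsub' (Finset.mem_insert_self v τ)
      have hσ' : σ.erase v ∈ K := hK σ hσ _ (Finset.erase_subset v σ)
      have hmem2 : ({Sum.inl v, Sum.inr ()} : Finset (V ⊕ Unit)) ∪ (σ.erase v).image Sum.inl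
          ∈ wed K v :=
        ⟨_, Finset.Subset.refl _, _, Finset.notMem_erase v σ, hσ', rfl,
          Or.inl (by rwa [Finset.insert_erase hvσ])⟩
      have hττ' : τ ⊆ σ.erase v := fun w hw =>
        Finset.mem_erase.2 ⟨fun e => hvτ (e ▸ hw), hsub' (Finset.mem_insert_of_mem hw)⟩
      have heq2 := hsmax _ hmem2
        (by rw [← hs_eq]
            exact Finset.union_subset_union (Finset.Subset.refl _) (Finset.image_subset_image hττ'))
      have h3 : σ.erase v ⊆ τ := by
        intro w hw
        have hws : Sum.inl w ∈ s :=
          heq2 ▸ Finset.mem_union_right _ (Finset.mem_image_of_mem _ hw)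
        rw [← hs_eq] at hws
        rcases Finset.mem_union.1 hws with h | h
        · exfalso
          rcases Finset.mem_insert.1 h with h' | h'
          · exact (Finset.mem_erase.1 hw).1 (Sum.inl.inj h')
          · exact absurd (Finset.mem_singleton.1 h') (by simp)
        · obtain ⟨w', hw', e⟩ := Finset.mem_image.1 h
          exact (Sum.inl.inj e) ▸ hw'
      refine Finset.Subset.antisymm ?_ hsub'
      rw [← Finset.insert_erase hvσ]
      exact Finset.insert_subset_insert v h3
    obtain ⟨b, hb⟩ := hlam _ hfacet
    set v₀ : {x : V // x ∈ insert v τ} := ⟨v, Finset.mem_insert_self v τ⟩ with hv₀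
    set h : (Fin n → ℤ) →ₗ[ℤ] ℤ := -(b.coord v₀) with hh
    set c := ((b.prod (Module.Basis.singleton Unit ℤ)).map (shear1 h)).map (snocLE n) with hc
    refine build_basis s c _
      (Sum.elim
        (fun x : {x : V // x ∈ insert v τ} =>
          ⟨Sum.inl x.1, by
            rw [← hs_eq]
            rcases Finset.mem_insert.1 x.2 with h' | h'
            · exact Finset.mem_union_left _ (by rw [h']; exact Finset.mem_insert_self _ _)
            · exact Finset.mem_union_right _ (Finset.mem_image_of_mem _ h')⟩)
        (fun _ : Unit => ⟨Sum.inr (), by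
            rw [← hs_eq]
            exact Finset.mem_union_left _ (by simp)⟩))
      ⟨?_, ?_⟩ ?_
    · -- injective
      rintro (⟨x, hx⟩ | ⟨⟩) (⟨y, hy⟩ | ⟨⟩) hij <;> simp_all [Subtype.ext_iff]
    · -- surjective
      rintro ⟨(w | u), hy⟩
      · have hw : w ∈ insert v τ := by
          rw [← hs_eq] at hy
          rcases Finset.mem_union.1 hy with h' | h'
          · rcases Finset.mem_insert.1 h' with h'' | h''
            · exact (Sum.inl.inj h'') ▸ Finset.mem_insert_self v τ
            · exact absurd (Finset.mem_singleton.1 h'') (by simp)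
          · obtain ⟨w', hw', e⟩ := Finset.mem_image.1 h'
            exact Finset.mem_insert_of_mem ((Sum.inl.inj e) ▸ hw')
        exact ⟨Sum.inl ⟨w, hw⟩, rfl⟩
      · exact ⟨Sum.inr (), rfl⟩
    · -- values
      rintro (⟨x, hx⟩ | ⟨⟩)
      · have hcx : c (Sum.inl ⟨x, hx⟩) = Fin.snoc (lam x) (h (lam x)) := by
          rw [hc]
          simp only [Module.Basis.map_apply, Module.Basis.prod_apply, Sum.elim_inl, Function.comp_apply,
            LinearMap.coe_inl]
          rw [show b ⟨x, hx⟩ = lam x from hb ⟨x, hx⟩]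
          rw [shear1_apply, snocLE_apply, zero_add]
        rw [hcx]
        by_cases hxv : x = v
        · subst hxv
          have : h (lam x) = -1 := by
            rw [hh, ← hb ⟨x, hx⟩]
            simp [Module.Basis.coord_apply, Module.Basis.repr_self, hv₀, Finsupp.single_apply]
          rw [this]
          simp
        · have : h (lam x) = 0 := by
            rw [hh, ← hb ⟨x, hx⟩]
            simp [Module.Basis.coord_apply, Module.Basis.repr_self, hv₀, Finsupp.single_apply,
              Subtype.ext_iff, hxv]
          rw [this]
          simp [hxv]
      · have hcu : c (Sum.inr ()) = Fin.snoc (0 : Fin n → ℤ) (1 : ℤ) := by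
          rw [hc]
          simp only [Module.Basis.map_apply, Module.Basis.prod_apply, Sum.elim_inr, Function.comp_apply,
            LinearMap.coe_inr, Module.Basis.singleton_apply]
          rw [shear1_apply, snocLE_apply, map_zero, add_zero]
        rw [hcu]
        simp
  · -- Case B : a = {u}, τ is a facet of K
    have hcard : a.card ≤ 1 := hcond.resolve_left hvK
    have hane : a.Nonempty := by
      by_contra hne
      rw [Finset.not_nonempty_iff_eq_empty] at hne
      have hmem : ({Sum.inr ()} : Finset (V ⊕ Unit)) ∪ τ.image Sum.inl ∈ wed K v :=
        ⟨{Sum.inr ()}, by simp, τ, hvτ, hτK, rfl, Or.inr (by simp)⟩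
      have heq := hsmax _ hmem
        (by rw [hseq, hne, Finset.empty_union]; exact Finset.subset_union_right)
      have h1 : Sum.inr () ∈ s := heq ▸ Finset.mem_union_left _ (Finset.mem_singleton_self _)
      rw [hseq, hne, Finset.empty_union] at h1
      obtain ⟨w', hw', e⟩ := Finset.mem_image.1 h1
      exact absurd e (by simp)
    obtain ⟨u, hu⟩ := Finset.card_eq_one.1
      (le_antisymm hcard (Finset.one_le_card.2 hane))
    have hus : u ∈ ({Sum.inl v, Sum.inr ()} : Finset (V ⊕ Unit)) :=
      ha (hu ▸ Finset.mem_singleton_self u)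
    have hτfacet : IsFacet K τ := by
      refine ⟨hτK, fun σ hσ hsubτ => ?_⟩
      by_cases hvσ : v ∈ σ
      · exfalso
        have hσ' : σ.erase v ∈ K := hK σ hσ _ (Finset.erase_subset v σ)
        have hmem : ({Sum.inl v, Sum.inr ()} : Finset (V ⊕ Unit)) ∪ (σ.erase v).image Sum.inl
            ∈ wed K v :=
          ⟨_, Finset.Subset.refl _, _, Finset.notMem_erase v σ, hσ', rfl,
            Or.inl (by rwa [Finset.insert_erase hvσ])⟩
        have hττ' : τ ⊆ σ.erase v := fun w hw =>
          Finset.mem_erase.2 ⟨fun e => hvτ (e ▸ hw), hsubτ hw⟩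
        have heq := hsmax _ hmem
          (by rw [hseq]
              exact Finset.union_subset (ha.trans Finset.subset_union_left)
                ((Finset.image_subset_image hττ').trans Finset.subset_union_right))
        have h1 : Sum.inl v ∈ s := heq ▸ Finset.mem_union_left _ (by simp)
        have h2 : Sum.inr () ∈ s := heq ▸ Finset.mem_union_left _ (by simp)
        rw [hseq, hu] at h1 h2
        have h1' : Sum.inl v = u := by
          rcases Finset.mem_union.1 h1 with h' | h'
          · exact (Finset.mem_singleton.1 h').symm ▸ rfl
          · exfalso
            obtain ⟨w', hw', e⟩ := Finset.mem_image.1 h'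
            exact hvτ ((Sum.inl.inj e) ▸ hw')
        have h2' : Sum.inr () = u := by
          rcases Finset.mem_union.1 h2 with h' | h'
          · exact Finset.mem_singleton.1 h'
          · exfalso
            obtain ⟨w', hw', e⟩ := Finset.mem_image.1 h'
            exact absurd e (by simp)
        exact absurd (h1'.trans h2'.symm) (by simp)
      · have hmem : a ∪ σ.image Sum.inl ∈ wed K v :=
          ⟨a, ha, σ, hvσ, hσ, rfl, Or.inr hcard⟩
        have heq := hsmax _ hmem
          (by rw [hseq]
              exact Finset.union_subset_union (Finset.Subset.refl a)
                (Finset.image_subset_image hsubτ))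
        refine Finset.Subset.antisymm (fun w hw => ?_) hsubτ
        have hws : Sum.inl w ∈ s :=
          heq ▸ Finset.mem_union_right _ (Finset.mem_image_of_mem _ hw)
        rw [hseq] at hws
        rcases Finset.mem_union.1 hws with h' | h'
        · exfalso
          rcases Finset.mem_insert.1 (ha h') with h'' | h''
          · exact hvσ ((Sum.inl.inj h'') ▸ hw)
          · exact absurd (Finset.mem_singleton.1 h'') (by simp)
        · obtain ⟨w', hw', e⟩ := Finset.mem_image.1 h'
          exact (Sum.inl.inj e) ▸ hw'
    obtain ⟨b, hb⟩ := hlam _ hτfacet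
    rw [hu] at hseq
    rcases Finset.mem_insert.1 hus with huv | hur
    · -- u = inl v : extra vertex is v₁
      subst huv
      set c := ((b.prod (Module.Basis.singleton Unit ℤ)).map (shear2 (lam v))).map (snocLE n) with hc
      refine build_basis s c _
        (Sum.elim
          (fun x : {x : V // x ∈ τ} =>
            ⟨Sum.inl x.1, by
              rw [hseq]; exact Finset.mem_union_right _ (Finset.mem_image_of_mem _ x.2)⟩)
          (fun _ : Unit => ⟨Sum.inl v, by
              rw [hseq]; exact Finset.mem_union_left _ (by simp)⟩))
        ⟨?_, ?_⟩ ?_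
      · rintro (⟨x, hx⟩ | ⟨⟩) (⟨y, hy⟩ | ⟨⟩) hij
        · simp only [Sum.elim_inl, Subtype.mk.injEq, Sum.inl.injEq] at hij
          exact congrArg Sum.inl (Subtype.ext hij)
        · simp only [Sum.elim_inl, Sum.elim_inr, Subtype.mk.injEq, Sum.inl.injEq] at hij
          exact absurd (hij ▸ hx) hvτ
        · simp only [Sum.elim_inl, Sum.elim_inr, Subtype.mk.injEq, Sum.inl.injEq] at hij
          exact absurd (hij ▸ hy : v ∈ τ) hvτ
        · rfl
      · rintro ⟨(w | u'), hy⟩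
        · rw [hseq] at hy
          rcases Finset.mem_union.1 hy with h' | h'
          · have : w = v := Sum.inl.inj (Finset.mem_singleton.1 h')
            subst this
            exact ⟨Sum.inr (), rfl⟩
          · obtain ⟨w', hw', e⟩ := Finset.mem_image.1 h'
            exact ⟨Sum.inl ⟨w, (Sum.inl.inj e) ▸ hw'⟩, rfl⟩
        · exfalso
          rw [hseq] at hy
          rcases Finset.mem_union.1 hy with h' | h'
          · exact absurd (Finset.mem_singleton.1 h') (by simp)
          · obtain ⟨w', hw', e⟩ := Finset.mem_image.1 h'
            exact absurd e (by simp)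
      · rintro (⟨x, hx⟩ | ⟨⟩)
        · have hcx : c (Sum.inl ⟨x, hx⟩) = Fin.snoc (lam x) (0 : ℤ) := by
            rw [hc]
            simp only [Module.Basis.map_apply, Module.Basis.prod_apply, Sum.elim_inl, Function.comp_apply,
              LinearMap.coe_inl]
            rw [show b ⟨x, hx⟩ = lam x from hb ⟨x, hx⟩]
            rw [shear2_apply, snocLE_apply, zero_smul, add_zero, neg_zero]
          rw [hcx]
          have hxv : x ≠ v := fun e => hvτ (e ▸ hx)
          simp [hxv]
        · have hcu : c (Sum.inr ()) = Fin.snoc (lam v) (-1 : ℤ) := by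
            rw [hc]
            simp only [Module.Basis.map_apply, Module.Basis.prod_apply, Sum.elim_inr, Function.comp_apply,
              LinearMap.coe_inr, Module.Basis.singleton_apply]
            rw [shear2_apply, snocLE_apply, one_smul, zero_add]
          rw [hcu]
          simp
    · -- u = inr () : extra vertex is v₂
      have huru : u = Sum.inr () := Finset.mem_singleton.1 hur
      subst huru
      set c := (b.prod (Module.Basis.singleton Unit ℤ)).map (snocLE n) with hc
      refine build_basis s c _
        (Sum.elim
          (fun x : {x : V // x ∈ τ} =>
            ⟨Sum.inl x.1, by
              rw [hseq]; exact Finset.mem_union_right _ (Finset.mem_image_of_mem _ x.2)⟩)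
          (fun _ : Unit => ⟨Sum.inr (), by
              rw [hseq]; exact Finset.mem_union_left _ (by simp)⟩))
        ⟨?_, ?_⟩ ?_
      · rintro (⟨x, hx⟩ | ⟨⟩) (⟨y, hy⟩ | ⟨⟩) hij <;> simp_all [Subtype.ext_iff]
      · rintro ⟨(w | u'), hy⟩
        · rw [hseq] at hy
          rcases Finset.mem_union.1 hy with h' | h'
          · exact absurd (Finset.mem_singleton.1 h') (by simp)
          · obtain ⟨w', hw', e⟩ := Finset.mem_image.1 h'
            exact ⟨Sum.inl ⟨w, (Sum.inl.inj e) ▸ hw'⟩, rfl⟩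
        · exact ⟨Sum.inr (), rfl⟩
      · rintro (⟨x, hx⟩ | ⟨⟩)
        · have hcx : c (Sum.inl ⟨x, hx⟩) = Fin.snoc (lam x) (0 : ℤ) := by
            rw [hc]
            simp only [Module.Basis.map_apply, Module.Basis.prod_apply, Sum.elim_inl, Function.comp_apply,
              LinearMap.coe_inl]
            rw [show b ⟨x, hx⟩ = lam x from hb ⟨x, hx⟩]
            rfl
          rw [hcx]
          have hxv : x ≠ v := fun e => hvτ (e ▸ hx)
          simp [hxv]
        · have hcu : c (Sum.inr ()) = Fin.snoc (0 : Fin n → ℤ) (1 : ℤ) := by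
            rw [hc]
            simp only [Module.Basis.map_apply, Module.Basis.prod_apply, Sum.elim_inr, Function.comp_apply,
              LinearMap.coe_inr, Module.Basis.singleton_apply]
            rfl
          rw [hcu]
          simp
end

section
/- With Λ an n×m characteristic matrix, r = (0, r₂, …, rₘ) a reduced marked row with marking 1 and s = (s₁, 0, s₃, …, sₘ) a reduced marked row with marking 2, the compatibility r^s = (s₁r₂, r₂, r₃ + s₃r₂, r₄ + s₄r₂, …, rₘ + sₘr₂) holds, meaning proj_{2₁} of the double-wedge matrix (Λ; r; s) equals the matrix (Λ^s; r^s). -/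
/-- The matrix `(Λ; r; s)` of the double wedge (wedged at the two distinct vertices `p, q`):
columns indexed by `p = 1₁`, `Sum.inr false = 1₂`, `q = 2₁`, `Sum.inr true = 2₂` and the
other vertices `w`; rows: the `n` rows of `Λ` (columns `a_w`, with `0` at `1₂, 2₂`), the
`r`-row `(-1, 1, r_q, 0, r_w, …)`, and the `s`-row `(s_p, 0, -1, 1, s_w, …)`. -/
def doubleWedgeMatrix {V : Type*} [DecidableEq V] {n : ℕ} (p q : V)
    (a : V → Fin n → ℤ) (r s : V → ℤ) : V ⊕ Bool → Fin (n + 2) → ℤ :=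
  Sum.elim
    (fun w : V =>
      if w = p then (Fin.snoc (Fin.snoc (a p) (-1 : ℤ)) (s p) : Fin (n + 2) → ℤ)
      else if w = q then (Fin.snoc (Fin.snoc (a q) (r q)) (-1 : ℤ) : Fin (n + 2) → ℤ)
      else (Fin.snoc (Fin.snoc (a w) (r w)) (s w) : Fin (n + 2) → ℤ))
    (fun b : Bool =>
      if b then (Fin.snoc (Fin.snoc (0 : Fin n → ℤ) (0 : ℤ)) (1 : ℤ) : Fin (n + 2) → ℤ)
      else (Fin.snoc (Fin.snoc (0 : Fin n → ℤ) (1 : ℤ)) (0 : ℤ) : Fin (n + 2) → ℤ))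

/-- The matrix `(Λ^s; r^s)` over the single wedge at `p` (vertex `2₂ = q` playing the role of
vertex `2`): columns `(a_p + s_p a_q, -1 + s_p r_q)ᵀ` at `p₁`, `(0, 1)ᵀ` at `p₂`, and
`(a_w + s_w a_q, r_w + s_w r_q)ᵀ` at the other vertices. -/
def projectedMatrix {V : Type*} [DecidableEq V] {n : ℕ} (p q : V)
    (a : V → Fin n → ℤ) (r s : V → ℤ) : V ⊕ Unit → Fin (n + 1) → ℤ :=
  Sum.elim
    (fun w : V =>
      if w = p then (Fin.snoc (a p + s p • a q) (-1 + s p * r q) : Fin (n + 1) → ℤ)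
      else (Fin.snoc (a w + s w • a q) (r w + s w * r q) : Fin (n + 1) → ℤ))
    (fun _ : Unit => (Fin.snoc (0 : Fin n → ℤ) (1 : ℤ) : Fin (n + 1) → ℤ))

/-- The vertex inclusion of the link of `2₁ = q` in the double wedge: `2₂` plays the role of
vertex `2`, `1₂ = Sum.inr ()` stays `1₂`, other vertices stay put. -/
def linkIncl {V : Type*} [DecidableEq V] (q : V) : V ⊕ Unit → V ⊕ Bool :=
  Sum.elim
    (fun w : V => if w = q then (Sum.inr true : V ⊕ Bool) else Sum.inl w)
    (fun _ : Unit => (Sum.inr false : V ⊕ Bool))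

/-- Forward map: absorb the last coordinate using the weight vector `w`. -/
def fwdMap {n : ℕ} (w : Fin (n + 1) → ℤ) : (Fin (n + 2) → ℤ) →ₗ[ℤ] (Fin (n + 1) → ℤ) where
  toFun x := fun i => x i.castSucc + x (Fin.last (n + 1)) * w i
  map_add' x y := by ext i; simp; ring
  map_smul' c x := by ext i; simp [smul_eq_mul]; ring

/-- Backward map: pad with a zero in the last coordinate. -/
def bwdMap (n : ℕ) : (Fin (n + 1) → ℤ) →ₗ[ℤ] (Fin (n + 2) → ℤ) where
  toFun y := Fin.snoc y 0
  map_add' x y := by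
    ext i
    refine Fin.lastCases ?_ ?_ i <;> simp
  map_smul' c x := by
    ext i
    refine Fin.lastCases ?_ ?_ i <;> simp

lemma fwdMap_snoc_neg_one {n : ℕ} (w : Fin (n + 1) → ℤ) :
    fwdMap w (Fin.snoc w (-1)) = 0 := by
  ext i
  simp [fwdMap]

lemma fwdMap_apply_snoc {n : ℕ} (w : Fin (n + 1) → ℤ) (y : Fin (n + 1) → ℤ) (c : ℤ) :
    fwdMap w (Fin.snoc y c) = fun i => y i + c * w i := by
  ext i
  simp [fwdMap]

/-- Compatibility `r^s = (s₁ r₂, r₂, r₃ + s₃ r₂, …)`: for reduced marked rows `r` (marking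
`p`, `r_p = 0`) and `s` (marking `q`, `s_q = 0`), the projection of the double-wedge matrix
`(Λ; r; s)` onto the link of `2₁` equals the matrix `(Λ^s; r^s)`, under the canonical
isomorphism `ℤ^{n+2}/⟨(a_q, r_q, -1)⟩ ≅ ℤ^{n+1}`. -/
theorem stmt_17 {V : Type*} [Fintype V] [DecidableEq V] (n : ℕ) (p q : V) (hpq : p ≠ q)
    (a : V → Fin n → ℤ) (r s : V → ℤ) (hr : r p = 0) (hs : s q = 0) :
    ∃ e : ((Fin (n + 2) → ℤ) ⧸
        Submodule.span ℤ {doubleWedgeMatrix p q a r s (Sum.inl q)}) ≃ₗ[ℤ] (Fin (n + 1) → ℤ),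
      ∀ x : V ⊕ Unit,
        e (Submodule.Quotient.mk (doubleWedgeMatrix p q a r s (linkIncl q x))) =
          projectedMatrix p q a r s x := by
  set w : Fin (n + 1) → ℤ := Fin.snoc (a q) (r q) with hw
  have hv : doubleWedgeMatrix p q a r s (Sum.inl q) = Fin.snoc w (-1) := by
    simp [doubleWedgeMatrix, hpq.symm, hw]
  set v : Fin (n + 2) → ℤ := Fin.snoc w (-1) with hvdef
  set N : Submodule ℤ (Fin (n + 2) → ℤ) :=
    Submodule.span ℤ {doubleWedgeMatrix p q a r s (Sum.inl q)} with hN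
  have hNle : N ≤ LinearMap.ker (fwdMap w) := by
    rw [hN, Submodule.span_le, Set.singleton_subset_iff, SetLike.mem_coe,
      LinearMap.mem_ker, hv, hvdef]
    exact fwdMap_snoc_neg_one w
  set F : ((Fin (n + 2) → ℤ) ⧸ N) →ₗ[ℤ] (Fin (n + 1) → ℤ) := Submodule.liftQ N (fwdMap w) hNle
    with hF
  set G : (Fin (n + 1) → ℤ) →ₗ[ℤ] ((Fin (n + 2) → ℤ) ⧸ N) := N.mkQ.comp (bwdMap n) with hG
  have hFG : F.comp G = LinearMap.id := by
    apply LinearMap.ext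
    intro y
    simp [hF, hG, bwdMap, fwdMap_apply_snoc]
  have hGF : G.comp F = LinearMap.id := by
    apply Submodule.linearMap_qext
    apply LinearMap.ext
    intro x
    simp only [LinearMap.comp_apply, Submodule.mkQ_apply, hF, Submodule.liftQ_apply, hG,
      LinearMap.id_apply]
    rw [Submodule.Quotient.eq]
    have hmem : x (Fin.last (n + 1)) • v ∈ N := by
      rw [hN, hv]
      exact Submodule.smul_mem _ _ (Submodule.mem_span_singleton_self _)
    convert hmem using 1
    ext i
    refine Fin.lastCases ?_ ?_ i
    · simp [bwdMap, fwdMap, hvdef, mul_comm]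
    · intro i
      simp [bwdMap, fwdMap, hvdef, mul_comm]
  refine ⟨LinearEquiv.ofLinear F G hFG hGF, ?_⟩
  intro x
  simp only [LinearEquiv.ofLinear_apply, hF, Submodule.liftQ_apply]
  rcases x with x | x
  · by_cases hxq : x = q
    · subst hxq
      have : linkIncl x (Sum.inl x) = Sum.inr true := by simp [linkIncl]
      rw [this]
      have hxp : x ≠ p := fun h => hpq h.symm
      simp [doubleWedgeMatrix, projectedMatrix, fwdMap_apply_snoc, hxp, hs, hw]
      ext i
      refine Fin.lastCases ?_ ?_ i <;> simp
    · have : linkIncl q (Sum.inl x) = Sum.inl x := by simp [linkIncl, hxq]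
      rw [this]
      by_cases hxp : x = p
      · subst hxp
        simp [doubleWedgeMatrix, projectedMatrix, fwdMap_apply_snoc, hw]
        ext i
        refine Fin.lastCases ?_ ?_ i <;> simp [mul_comm]
      · simp [doubleWedgeMatrix, projectedMatrix, fwdMap_apply_snoc, hxp, hxq, hw]
        ext i
        refine Fin.lastCases ?_ ?_ i <;> simp [mul_comm]
  · have : linkIncl q (Sum.inr x) = Sum.inr false := by simp [linkIncl]
    rw [this]
    simp [doubleWedgeMatrix, projectedMatrix, fwdMap_apply_snoc]
end
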